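/- arXiv:1307.2076 — 4 statements merged into one kernel-verified Lean document; each statement's English description precedes it below -/
import Mathlib

section
/- Let K be a totally real number field of degree s, U the group of units of an order O in K, with fundamental units η_1,...,η_{s-1}. Set c_0 = exp(Σ_{i,j < s} |ln|σ_i(η_j)||) (summed over 1 ≤ i,j ≤ s-1). Then for any y_1,...,y_s > 0 with y = y_1···y_s, there exists a unit η ∈ U such that y_i · y^{-1/s} · |σ_i(η)| ∈ [1/c_0, c_0] for all i = 1,...,s. -/
/-!
Put `x_i = y_i y^{-1/s}`, so that `∑ log x_i = 0`. The columns `(log |σ_i(η_j)|)_i` have zero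
sum as well, and their first `s - 1` coordinates form an invertible matrix. Solving for the real
combination of columns that cancels the first `s - 1` coordinates of `log x` and rounding its
coefficients to integers `a_j` leaves each of these coordinates below half a row sum; the last
coordinate is then bounded by the total, since all coordinates still sum to zero.
Exponentiating, `η = ∏ η_j ^ a_j` is the required unit.
-/

open Finset Matrix

theorem Matrix.exists_int_abs_add_mulVec_le {ι : Type*} [Fintype ι] [DecidableEq ι]
    (M : Matrix ι ι ℝ) (hM : M.det ≠ 0) (v : ι → ℝ) :
    ∃ a : ι → ℤ, ∀ i,
      |v i + (M *ᵥ fun j => (a j : ℝ)) i| ≤ (∑ j, |M i j|) / 2 := by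
  set b := M⁻¹ *ᵥ (-v)
  have hb : M *ᵥ b = -v := by
    rw [mulVec_mulVec, mul_nonsing_inv _ (isUnit_iff_ne_zero.mpr hM), one_mulVec]
  refine ⟨fun j => round (b j), fun i => ?_⟩
  have hres : v i + (M *ᵥ fun j => (round (b j) : ℝ)) i
      = (M *ᵥ fun j => (round (b j) : ℝ) - b j) i := by
    rw [← Pi.sub_def, mulVec_sub, hb, Pi.sub_apply, Pi.neg_apply, sub_neg_eq_add, add_comm]
  rw [hres]
  calc |∑ j, M i j * ((round (b j) : ℝ) - b j)| ≤ ∑ j, |M i j| * (1 / 2) := by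
        refine (abs_sum_le_sum_abs _ _).trans (sum_le_sum fun j _ => ?_)
        rw [abs_mul, abs_sub_comm]
        exact mul_le_mul_of_nonneg_left (abs_sub_round _) (abs_nonneg _)
    _ = (∑ j, |M i j|) / 2 := by rw [← sum_mul]; ring

theorem Fin.abs_last_le_sum_abs_castSucc {α : Type*} [AddCommGroup α] [LinearOrder α]
    [IsOrderedAddMonoid α] {n : ℕ} (w : Fin (n + 1) → α) (hw : ∑ i, w i = 0) :
    |w (Fin.last n)| ≤ ∑ i : Fin n, |w i.castSucc| := by
  rw [Fin.sum_univ_castSucc, add_eq_zero_iff_eq_neg'] at hw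
  rw [hw, abs_neg]
  exact abs_sum_le_sum_abs _ _

theorem Real.exp_mem_Icc_of_abs_le {x S : ℝ} (h : |x| ≤ S) :
    Real.exp x ∈ Set.Icc (Real.exp S)⁻¹ (Real.exp S) := by
  rw [← Real.exp_neg]
  exact ⟨Real.exp_le_exp.mpr (neg_le_of_abs_le h), Real.exp_le_exp.mpr (le_of_abs_le h)⟩

theorem Real.sum_log_mul_prod_rpow_neg_one_div {n : ℕ} (hn : n ≠ 0) (y : Fin n → ℝ)
    (hy : ∀ i, 0 < y i) :
    ∑ i, Real.log (y i * (∏ k, y k) ^ (-(1 : ℝ) / n)) = 0 := by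
  have hP : 0 < ∏ k, y k := prod_pos fun k _ => hy k
  simp only [Real.log_mul (hy _).ne' (Real.rpow_pos_of_pos hP _).ne', Real.log_rpow hP,
    sum_add_distrib, ← Real.log_prod fun i _ => (hy i).ne', sum_const, card_univ,
    Fintype.card_fin, nsmul_eq_mul]
  field_simp
  ring

theorem MonoidHom.log_abs_map_prod_zpow {R ι : Type*} [CommMonoid R] [Fintype ι]
    (φ : R →* ℝ) (u : ι → Rˣ) (a : ι → ℤ) :
    Real.log |φ ↑(∏ j, u j ^ a j)| = ∑ j, a j * Real.log |φ (u j)| := by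
  have h : φ ↑(∏ j, u j ^ a j) = ∏ j, φ (u j) ^ a j := by
    simp [← Units.coe_map, map_prod, map_zpow]
  have hne : ∀ j, φ (u j) ≠ 0 := fun j => ((u j).isUnit.map φ).ne_zero
  rw [h, abs_prod, Real.log_prod fun j _ => (abs_pos.mpr (zpow_ne_zero _ (hne j))).ne']
  simp [abs_zpow, Real.log_zpow]

theorem Matrix.exists_int_abs_add_mulVec_le_of_sum_eq_zero {n : ℕ}
    (L : Matrix (Fin (n + 1)) (Fin n) ℝ) (hL : ∀ j, ∑ i, L i j = 0)
    (hdet : (L.submatrix Fin.castSucc id).det ≠ 0)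
    (z : Fin (n + 1) → ℝ) (hz : ∑ i, z i = 0) :
    ∃ a : Fin n → ℤ, ∀ i,
      |z i + (L *ᵥ fun j => (a j : ℝ)) i| ≤ ∑ i : Fin n, ∑ j, |L i.castSucc j| := by
  obtain ⟨a, ha⟩ := (L.submatrix Fin.castSucc id).exists_int_abs_add_mulVec_le hdet
    (fun i => z i.castSucc)
  set w := z + L *ᵥ fun j => (a j : ℝ)
  set r : Fin n → ℝ := fun i => ∑ j, |L i.castSucc j|
  have hr : ∀ i, 0 ≤ r i := fun i => sum_nonneg fun _ _ => abs_nonneg _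
  have hrow : ∀ i, |w i.castSucc| ≤ r i / 2 := ha
  have hw : ∑ i, w i = 0 := by
    simp only [w, Pi.add_apply, sum_add_distrib, hz, mulVec, dotProduct]
    rw [sum_comm]
    simp [← sum_mul, hL]
  refine ⟨a, Fin.lastCases ?_ fun i => ?_⟩
  · calc |w (Fin.last n)|
        ≤ ∑ i, |w i.castSucc| := Fin.abs_last_le_sum_abs_castSucc w hw
      _ ≤ ∑ i, r i / 2 := sum_le_sum fun i _ => hrow i
      _ ≤ ∑ i, r i := sum_le_sum fun i _ => half_le_self (hr i)
  · calc |w i.castSucc| ≤ r i / 2 := hrow i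
      _ ≤ r i := half_le_self (hr i)
      _ ≤ ∑ i, r i := single_le_sum (fun i _ => hr i) (mem_univ i)

theorem exists_unit_rescaling_general
    (K : Type*) [Field K]
    (s : ℕ) (hs : 2 ≤ s) (e : Fin s ≃ (K →+* ℝ))
    (O : Subalgebra ℤ K) (η : Fin (s - 1) → Oˣ)
    (hnorm : ∀ j, |∏ i : Fin s, e i (((η j : O) : K))| = 1)
    (hdet : (Matrix.of fun i j : Fin (s - 1) =>
        Real.log (abs (e (Fin.castLE (Nat.sub_le s 1) i) (((η j : O) : K))))).det ≠ 0)
    (c₀ : ℝ)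
    (hc₀ : c₀ = Real.exp (∑ i : Fin (s - 1), ∑ j : Fin (s - 1),
        |Real.log (abs (e (Fin.castLE (Nat.sub_le s 1) i) (((η j : O) : K))))|))
    (y : Fin s → ℝ) (hy : ∀ i, 0 < y i) :
    ∃ u : Oˣ, (∃ a : Fin (s - 1) → ℤ, u = ∏ j, (η j) ^ (a j)) ∧
      ∀ i : Fin s,
        y i * (∏ k, y k) ^ (-(1 : ℝ) / s) * |e i (((u : O) : K))|
          ∈ Set.Icc c₀⁻¹ c₀ := by
  obtain ⟨n, rfl⟩ : ∃ n, s = n + 1 := ⟨s - 1, by omega⟩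
  set σ : Fin (n + 1) → O →* ℝ := fun i => (e i).comp O.val.toRingHom
  set x := fun i => y i * (∏ k, y k) ^ (-(1 : ℝ) / (n + 1 : ℕ))
  have hx : ∀ i, 0 < x i := fun i =>
    mul_pos (hy i) (Real.rpow_pos_of_pos (prod_pos fun k _ => hy k) _)
  set L : Matrix (Fin (n + 1)) (Fin n) ℝ := .of fun i j => Real.log |σ i (η j)|
  have hσ : ∀ i (u : Oˣ), e i ((u : O) : K) ≠ 0 := fun i u => (u.isUnit.map (σ i)).ne_zero
  have hL : ∀ j, ∑ i, L i j = 0 := fun j => by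
    rw [← Real.log_one, ← hnorm j, abs_prod,
      Real.log_prod fun i _ => abs_ne_zero.mpr (hσ i (η j))]
    rfl
  obtain ⟨a, ha⟩ := L.exists_int_abs_add_mulVec_le_of_sum_eq_zero hL hdet
    (fun i => Real.log (x i)) (Real.sum_log_mul_prod_rpow_neg_one_div n.succ_ne_zero y hy)
  refine ⟨∏ j, η j ^ a j, ⟨a, rfl⟩, fun i => ?_⟩
  have hu : x i * |σ i ↑(∏ j, η j ^ a j)|
      = Real.exp (Real.log (x i) + (L *ᵥ fun j => (a j : ℝ)) i) := by
    rw [Real.exp_add, Real.exp_log (hx i), ← Real.exp_log (abs_pos.mpr (hσ i _) : 0 < |σ i _|),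
      (σ i).log_abs_map_prod_zpow]
    simp only [mulVec, dotProduct, L, of_apply, mul_comm]
    rfl
  rw [hc₀]
  exact hu ▸ Real.exp_mem_Icc_of_abs_le (ha i)

/-- Dirichlet-type rescaling lemma: if `η_1,…,η_{s-1}` are fundamental units of an
order `O` of a totally real field `K` of degree `s` (each of norm `±1`, with the
`(s-1)×(s-1)` matrix of logarithms nonsingular) and
`c₀ = exp(∑_{i,j<s} |log |σ_i(η_j)||)`, then for any positive reals `y_1,…,y_s`
with `y = y_1⋯y_s` there is a unit `η ∈ Oˣ` such that
`y_i · y^{-1/s} · |σ_i(η)| ∈ [1/c₀, c₀]` for all `i`. -/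
theorem exists_unit_rescaling
    (K : Type*) [Field K] [NumberField K]
    (s : ℕ) (hs : 2 ≤ s) (e : Fin s ≃ (K →+* ℝ))
    (O : Subalgebra ℤ K) (η : Fin (s - 1) → Oˣ)
    (hnorm : ∀ j, |∏ i : Fin s, e i (((η j : O) : K))| = 1)
    (hdet : (Matrix.of fun i j : Fin (s - 1) =>
        Real.log (abs (e (Fin.castLE (Nat.sub_le s 1) i) (((η j : O) : K))))).det ≠ 0)
    (c₀ : ℝ)
    (hc₀ : c₀ = Real.exp (∑ i : Fin (s - 1), ∑ j : Fin (s - 1),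
        |Real.log (abs (e (Fin.castLE (Nat.sub_le s 1) i) (((η j : O) : K))))|))
    (y : Fin s → ℝ) (hy : ∀ i, 0 < y i) :
    ∃ u : Oˣ, (∃ a : Fin (s - 1) → ℤ, u = ∏ j, (η j) ^ (a j)) ∧
      ∀ i : Fin s,
        y i * (∏ k, y k) ^ (-(1 : ℝ) / s) * |e i (((u : O) : K))|
          ∈ Set.Icc c₀⁻¹ c₀ :=
  exists_unit_rescaling_general K s hs e O η hnorm hdet c₀ hc₀ y hy
end

section
/- Let Γ ⊂ ℝ^s be a lattice with |Nm(γ)| ≥ c^s for all nonzero γ ∈ Γ (where Nm(x) = x_1···x_s and c > 0), and let B be a box of the form Π_{i<s}(κ_i 2^{m_i}, κ_i 2^{m_i+1}] × (j κ_s 2^{-m_1-···-m_{s-1}} c^s, (j+1) κ_s 2^{-m_1-···-m_{s-1}} c^s] with κ_i ∈ {-1,1}, m_i ∈ Z, j ≥ 0 an integer. Then B contains at most one point of Γ. -/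
/-!
If two points `v ≠ w` of `Γ` lie in the box, then `|κ_i v_i - κ_i w_i|` would be smaller than the
`i`-th side length of the box, so `|Nm (v - w)|` would be smaller than the volume of the box,
which is exactly `c^{s+1}`; this contradicts admissibility since `v - w ∈ Γ ∖ {0}`.
-/

open Finset

lemma zpow_sum₀ {ι G₀ : Type*} [CommGroupWithZero G₀] {a : G₀} (ha : a ≠ 0)
    (s : Finset ι) (n : ι → ℤ) : a ^ (∑ i ∈ s, n i) = ∏ i ∈ s, a ^ n i := by
  classical
  induction s using Finset.induction with
  | empty => simp
  | insert i s hi ih => rw [sum_insert hi, prod_insert hi, zpow_add₀ ha, ih]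

lemma abs_prod_lt_prod_of_abs_lt {ι R : Type*} [CommRing R] [LinearOrder R] [IsStrictOrderedRing R]
    {s : Finset ι} {f g : ι → R} (hs : s.Nonempty) (h : ∀ i ∈ s, |f i| < g i) :
    |∏ i ∈ s, f i| < ∏ i ∈ s, g i := by
  rw [abs_prod]
  by_cases hzero : ∃ i ∈ s, f i = 0
  · obtain ⟨i, hi, hfi⟩ := hzero
    rw [prod_eq_zero hi (by simp [hfi])]
    exact prod_pos fun k hk => (abs_nonneg _).trans_lt (h k hk)
  · push Not at hzero
    exact prod_lt_prod_of_nonempty (fun i hi => abs_pos.2 (hzero i hi)) h hs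

lemma abs_sub_lt_of_mul_mem_Ioc {R : Type*} [CommRing R] [LinearOrder R] [IsStrictOrderedRing R]
    {κ a b x y : R} (hκ : |κ| = 1) (ha : κ * a ∈ Set.Ioc x y) (hb : κ * b ∈ Set.Ioc x y) :
    |a - b| < y - x := by
  have hsub : |κ * a - κ * b| < y - x := by
    rw [abs_sub_lt_iff]
    constructor <;> linarith [ha.1, ha.2, hb.1, hb.2]
  rwa [← mul_sub, abs_mul, hκ, one_mul] at hsub

lemma eq_of_abs_prod_sub_lt {ι R : Type*} [Fintype ι] [CommRing R] [LinearOrder R]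
    {Γ : AddSubgroup (ι → R)} {N : R} (hadm : ∀ γ ∈ Γ, γ ≠ 0 → N ≤ |∏ i, γ i|)
    {v w : ι → R} (hv : v ∈ Γ) (hw : w ∈ Γ) (h : |∏ i, (v - w) i| < N) : v = w := by
  by_contra hne
  exact (hadm _ (sub_mem hv hw) (sub_ne_zero.2 hne)).not_gt h

theorem admissible_lattice_box_at_most_one_point_general
    (s : ℕ) (Γ : AddSubgroup (Fin (s + 1) → ℝ)) (c : ℝ)
    (hadm : ∀ γ ∈ Γ, γ ≠ 0 → c ^ (s + 1) ≤ |∏ i, γ i|)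
    (m : Fin s → ℤ) (κ : Fin (s + 1) → ℝ) (hκ : ∀ i, κ i = 1 ∨ κ i = -1)
    (j : ℕ) (v w : Fin (s + 1) → ℝ) (hv : v ∈ Γ) (hw : w ∈ Γ)
    (hvB : (∀ i : Fin s, κ i.castSucc * v i.castSucc ∈
        Set.Ioc ((2 : ℝ) ^ (m i)) ((2 : ℝ) ^ (m i + 1))) ∧
      κ (Fin.last s) * v (Fin.last s) ∈
        Set.Ioc ((j : ℝ) * (2 : ℝ) ^ (-∑ i, m i) * c ^ (s + 1))
          (((j : ℝ) + 1) * (2 : ℝ) ^ (-∑ i, m i) * c ^ (s + 1)))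
    (hwB : (∀ i : Fin s, κ i.castSucc * w i.castSucc ∈
        Set.Ioc ((2 : ℝ) ^ (m i)) ((2 : ℝ) ^ (m i + 1))) ∧
      κ (Fin.last s) * w (Fin.last s) ∈
        Set.Ioc ((j : ℝ) * (2 : ℝ) ^ (-∑ i, m i) * c ^ (s + 1))
          (((j : ℝ) + 1) * (2 : ℝ) ^ (-∑ i, m i) * c ^ (s + 1))) :
    v = w := by
  have hκ1 (i) : |κ i| = 1 := by rcases hκ i with h | h <;> simp [h]
  let side : Fin (s + 1) → ℝ :=
    Fin.snoc (fun i => (2 : ℝ) ^ m i) ((2 : ℝ) ^ (-∑ i, m i) * c ^ (s + 1))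
  have hside : ∀ i, |(v - w) i| < side i := by
    refine Fin.lastCases ?_ fun i => ?_
    · have := abs_sub_lt_of_mul_mem_Ioc (hκ1 _) hvB.2 hwB.2
      simp only [side, Fin.snoc_last, Pi.sub_apply]
      linarith
    · have := abs_sub_lt_of_mul_mem_Ioc (hκ1 _) (hvB.1 i) (hwB.1 i)
      simp only [side, Fin.snoc_castSucc, Pi.sub_apply]
      rwa [zpow_add_one₀ two_ne_zero, mul_two, add_sub_cancel_right] at this
  have hvolume : ∏ i, side i = c ^ (s + 1) := by
    simp only [side, Fin.prod_univ_castSucc, Fin.snoc_castSucc, Fin.snoc_last, zpow_neg,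
      zpow_sum₀ (two_ne_zero : (2 : ℝ) ≠ 0)]
    field_simp
  refine eq_of_abs_prod_sub_lt hadm hv hw ?_
  rw [← hvolume]
  exact abs_prod_lt_prod_of_abs_lt univ_nonempty fun i _ => hside i

/-- An admissible lattice `Γ ⊂ ℝ^{s+1}` (with `|Nm γ| ≥ c^{s+1}` for nonzero `γ`)
meets each box `∏_{i<s} κ_i·(2^{m_i}, 2^{m_i+1}] × κ_s·(j·2^{-∑m}c^{s+1}, (j+1)·2^{-∑m}c^{s+1}]`
in at most one point. -/
theorem admissible_lattice_box_at_most_one_point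
    (s : ℕ) (Γ : AddSubgroup (Fin (s + 1) → ℝ)) (c : ℝ) (hc : 0 < c)
    (hadm : ∀ γ ∈ Γ, γ ≠ 0 → c ^ (s + 1) ≤ |∏ i, γ i|)
    (m : Fin s → ℤ) (κ : Fin (s + 1) → ℝ) (hκ : ∀ i, κ i = 1 ∨ κ i = -1)
    (j : ℕ) (v w : Fin (s + 1) → ℝ) (hv : v ∈ Γ) (hw : w ∈ Γ)
    (hvB : (∀ i : Fin s, κ i.castSucc * v i.castSucc ∈
        Set.Ioc ((2 : ℝ) ^ (m i)) ((2 : ℝ) ^ (m i + 1))) ∧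
      κ (Fin.last s) * v (Fin.last s) ∈
        Set.Ioc ((j : ℝ) * (2 : ℝ) ^ (-∑ i, m i) * c ^ (s + 1))
          (((j : ℝ) + 1) * (2 : ℝ) ^ (-∑ i, m i) * c ^ (s + 1)))
    (hwB : (∀ i : Fin s, κ i.castSucc * w i.castSucc ∈
        Set.Ioc ((2 : ℝ) ^ (m i)) ((2 : ℝ) ^ (m i + 1))) ∧
      κ (Fin.last s) * w (Fin.last s) ∈
        Set.Ioc ((j : ℝ) * (2 : ℝ) ^ (-∑ i, m i) * c ^ (s + 1))
          (((j : ℝ) + 1) * (2 : ℝ) ^ (-∑ i, m i) * c ^ (s + 1))) :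
    v = w :=
  admissible_lattice_box_at_most_one_point_general s Γ c hadm m κ hκ j v w hv hw hvB hwB
end

section
/- Let Γ ⊂ ℝ^s be a lattice with |Nm(γ)| ≥ c^s for all nonzero γ ∈ Γ, and let N_1,...,N_s > 0 with N = N_1···N_s. Then for τ = N^{-2} and N sufficiently large, the box [0, N_1+τ) × ··· × [0, N_s+τ) minus the box [0, N_1-τ) × ··· × [0, N_s-τ) is a union of 2^s - 1 boxes each of volume less than c^s, so each translate of each such box contains at most one point of Γ; consequently the number of points of Γ + x in the outer box minus the number in the inner box is at most 2^s - 1, for every x ∈ ℝ^s. -/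
/-!
A point of `Γ + x` in the outer box but not in the inner one is classified by the nonempty set
`T` of coordinates in which it lies in the boundary layer `[N i - τ, N i + τ)`. Two such points with
the same `T` differ by less than `2τ` in the coordinates of `T` and by less than `N i - τ` in the
others, so their difference `γ ∈ Γ` has `|Nm γ| < (2τ)^|T| ∏_{i ∉ T} (N i - τ)`, which is one term of
the expansion of `∏ (N i + τ) = ∏ (2τ + (N i - τ))` other than `∏ (N i - τ)`, hence `< c^s`; so
`γ = 0`. The classification is therefore injective into the `2^s - 1` nonempty subsets.
-/

open Finset

theorem Finset.ncard_setOf_nonempty (ι : Type*) [Fintype ι] :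
    {T : Finset ι | T.Nonempty}.ncard = 2 ^ Fintype.card ι - 1 := by
  have hcompl : {T : Finset ι | T.Nonempty} = Set.univ \ {∅} := by
    ext T; simp [Finset.nonempty_iff_ne_empty]
  rw [hcompl, Set.ncard_sdiff_singleton_of_mem (Set.mem_univ _), Set.ncard_univ,
    Nat.card_eq_fintype_card, Fintype.card_finset]

theorem Fintype.prod_piecewise_add_prod_le_prod_add {ι R : Type*} [Fintype ι] [DecidableEq ι]
    [CommSemiring R] [PartialOrder R] [IsOrderedRing R] {f g : ι → R} (hf : 0 ≤ f) (hg : 0 ≤ g)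
    {T : Finset ι} (hT : T.Nonempty) :
    ∏ i, T.piecewise f g i + ∏ i, g i ≤ ∏ i, (f i + g i) := by
  have hterm : ∀ t : Finset ι, 0 ≤ (∏ i ∈ t, f i) * ∏ i ∈ tᶜ, g i := fun t =>
    mul_nonneg (prod_nonneg fun i _ => hf i) (prod_nonneg fun i _ => hg i)
  calc ∏ i, T.piecewise f g i + ∏ i, g i
      = ∑ t ∈ {T, ∅}, (∏ i ∈ t, f i) * ∏ i ∈ tᶜ, g i := by
        rw [sum_pair hT.ne_empty, prod_piecewise, univ_inter, ← compl_eq_univ_sdiff]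
        simp
    _ ≤ ∏ i, (f i + g i) := by
        rw [Fintype.prod_add]
        exact sum_le_univ_sum_of_nonneg hterm

theorem AddSubgroup.eq_of_abs_sub_lt_of_prod_lt {ι R : Type*} [Fintype ι] [CommRing R]
    [LinearOrder R] [IsStrictOrderedRing R] {Γ : AddSubgroup (ι → R)} {V : R}
    (hadm : ∀ γ ∈ Γ, γ ≠ 0 → V ≤ |∏ i, γ i|) {w : ι → R} (hw : ∏ i, w i < V)
    {u v : ι → R} (hu : u ∈ Γ) (hv : v ∈ Γ) (huv : ∀ i, |u i - v i| < w i) : u = v := by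
  by_contra hne
  have hlt : |∏ i, (u - v) i| < V :=
    calc |∏ i, (u - v) i| = ∏ i, |u i - v i| := by simp [abs_prod]
      _ ≤ ∏ i, w i := prod_le_prod (fun i _ => abs_nonneg _) fun i _ => (huv i).le
      _ < V := hw
  exact (hadm _ (sub_mem hu hv) (sub_ne_zero.mpr hne)).not_gt hlt

section Shell

variable {ι R : Type*} [Fintype ι] [LinearOrder R] (m d : ι → R)

noncomputable def coordsBeyond (y : ι → R) : Finset ι := {i | m i ≤ y i}

variable {m d}

theorem coordsBeyond_nonempty [Zero R] {y : ι → R} (hy : ∀ i, 0 ≤ y i)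
    (hin : y ∉ Set.univ.pi fun i => Set.Ico 0 (m i)) : (coordsBeyond m y).Nonempty := by
  simp only [Set.mem_univ_pi, Set.mem_Ico, not_forall, not_and, not_lt] at hin
  obtain ⟨i, hi⟩ := hin
  exact ⟨i, by simpa [coordsBeyond] using hi (hy i)⟩

theorem abs_sub_lt_piecewise_of_coordsBeyond_eq [DecidableEq ι] [AddCommGroup R]
    [IsOrderedAddMonoid R] {y z : ι → R}
    (hy : y ∈ Set.univ.pi fun i => Set.Ico 0 (m i + d i))
    (hz : z ∈ Set.univ.pi fun i => Set.Ico 0 (m i + d i))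
    (hyz : coordsBeyond m y = coordsBeyond m z) (i : ι) :
    |y i - z i| < (coordsBeyond m y).piecewise d m i := by
  obtain ⟨hy0, hy1⟩ := hy i (Set.mem_univ i)
  obtain ⟨hz0, hz1⟩ := hz i (Set.mem_univ i)
  have hmem : m i ≤ y i ↔ m i ≤ z i := by
    simpa [coordsBeyond] using congrArg (i ∈ ·) hyz
  by_cases hi : m i ≤ y i
  · rw [piecewise_eq_of_mem _ _ _ (by simpa [coordsBeyond] using hi),
      ← sub_sub_sub_cancel_right _ _ (m i)]
    exact abs_sub_lt_of_nonneg_of_lt (sub_nonneg.mpr hi) (sub_lt_iff_lt_add'.mpr hy1)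
      (sub_nonneg.mpr (hmem.mp hi)) (sub_lt_iff_lt_add'.mpr hz1)
  · rw [piecewise_eq_of_notMem _ _ _ (by simpa [coordsBeyond] using hi)]
    exact abs_sub_lt_of_nonneg_of_lt hy0 (not_le.mp hi) hz0 (not_le.mp (mt hmem.mpr hi))

end Shell

theorem lattice_points_outer_minus_inner_general
    (s : ℕ) (Γ : AddSubgroup (Fin s → ℝ)) (c : ℝ)
    (hadm : ∀ γ ∈ Γ, γ ≠ 0 → c ^ s ≤ |∏ i, γ i|)
    (N : Fin s → ℝ)
    (τ : ℝ) (hτ : τ = ((∏ i, N i) ^ 2)⁻¹)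
    (hτN : ∀ i, τ < N i)
    (hvol : (∏ i, (N i + τ)) - (∏ i, (N i - τ)) < c ^ s)
    (x : Fin s → ℝ) :
    ({v : Fin s → ℝ | v ∈ Γ ∧
        (v + x) ∈ Set.univ.pi (fun i => Set.Ico 0 (N i + τ)) ∧
        (v + x) ∉ Set.univ.pi (fun i => Set.Ico 0 (N i - τ))}).Finite ∧
    ({v : Fin s → ℝ | v ∈ Γ ∧
        (v + x) ∈ Set.univ.pi (fun i => Set.Ico 0 (N i + τ)) ∧
        (v + x) ∉ Set.univ.pi (fun i => Set.Ico 0 (N i - τ))}).ncard ≤ 2 ^ s - 1 := by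
  set m : Fin s → ℝ := fun i => N i - τ
  set d : Fin s → ℝ := fun _ => 2 * τ
  simp only [show ∀ i, N i + τ = m i + d i from fun i => by ring]
  set A := {v : Fin s → ℝ | v ∈ Γ ∧ (v + x) ∈ Set.univ.pi (fun i => Set.Ico 0 (m i + d i)) ∧
    (v + x) ∉ Set.univ.pi (fun i => Set.Ico 0 (m i))}
  have hmaps : Set.MapsTo (fun v => coordsBeyond m (v + x)) A {T | T.Nonempty} :=
    fun v hv => coordsBeyond_nonempty (fun i => (hv.2.1 i (Set.mem_univ i)).1) hv.2.2
  have hshell : ∀ T : Finset (Fin s), T.Nonempty → ∏ i, T.piecewise d m i < c ^ s := by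
    intro T hT
    have hd : 0 ≤ d := fun _ => by simp only [d, hτ]; positivity
    have hm : 0 ≤ m := fun i => sub_nonneg.mpr (hτN i).le
    have hsplit : ∏ i, (N i + τ) = ∏ i, (d i + m i) := prod_congr rfl fun i _ => by ring
    linarith [Fintype.prod_piecewise_add_prod_le_prod_add hd hm hT]
  have hinj : Set.InjOn (fun v => coordsBeyond m (v + x)) A := by
    intro u hu v hv huv
    refine Γ.eq_of_abs_sub_lt_of_prod_lt hadm (hshell _ (hmaps hu)) hu.1 hv.1 fun i => ?_
    simpa using abs_sub_lt_piecewise_of_coordsBeyond_eq hu.2.1 hv.2.1 huv i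
  refine ⟨Set.Finite.of_injOn hmaps hinj (Set.toFinite _), ?_⟩
  calc A.ncard ≤ {T : Finset (Fin s) | T.Nonempty}.ncard :=
        Set.ncard_le_ncard_of_injOn _ hmaps hinj
    _ = 2 ^ s - 1 := by rw [Finset.ncard_setOf_nonempty, Fintype.card_fin]

/-- For an admissible lattice `Γ` (with `|Nm γ| ≥ c^s` for nonzero `γ ∈ Γ`), positive
sides `N_1,…,N_s`, `τ = (N_1⋯N_s)^{-2}`, and `N` large enough that
`∏(N_i+τ) − ∏(N_i−τ) < c^s` and `τ < N_i`, the set of points of `Γ + x` lying in the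
outer box `∏ [0, N_i+τ)` but not in the inner box `∏ [0, N_i−τ)` is finite of
cardinality at most `2^s − 1`, for every `x`. -/
theorem lattice_points_outer_minus_inner
    (s : ℕ) (Γ : AddSubgroup (Fin s → ℝ)) (c : ℝ) (hc : 0 < c)
    (hadm : ∀ γ ∈ Γ, γ ≠ 0 → c ^ s ≤ |∏ i, γ i|)
    (N : Fin s → ℝ) (hN : ∀ i, 0 < N i)
    (τ : ℝ) (hτ : τ = ((∏ i, N i) ^ 2)⁻¹)
    (hτN : ∀ i, τ < N i)
    (hvol : (∏ i, (N i + τ)) - (∏ i, (N i - τ)) < c ^ s)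
    (x : Fin s → ℝ) :
    ({v : Fin s → ℝ | v ∈ Γ ∧
        (v + x) ∈ Set.univ.pi (fun i => Set.Ico 0 (N i + τ)) ∧
        (v + x) ∉ Set.univ.pi (fun i => Set.Ico 0 (N i - τ))}).Finite ∧
    ({v : Fin s → ℝ | v ∈ Γ ∧
        (v + x) ∈ Set.univ.pi (fun i => Set.Ico 0 (N i + τ)) ∧
        (v + x) ∉ Set.univ.pi (fun i => Set.Ico 0 (N i - τ))}).ncard ≤ 2 ^ s - 1 :=
  lattice_points_outer_minus_inner_general s Γ c hadm N τ hτ hτN hvol x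
end

section
/- Let Γ^⊥ ⊂ ℝ^s be a lattice with determinant D and |Nm(γ)| ≥ c^s for all nonzero γ ∈ Γ^⊥, and fix integers m_1,...,m_s with m_1 + ··· + m_s = 0, q = 2 + ⌊D/c^s⌋. Then by Minkowski's convex body theorem, the box Π_{i=1}^{s-1}[-q^{m_i}, q^{m_i}] × [-D q^{m_s}, D q^{m_s}] contains a nonzero point γ ∈ Γ^⊥ with |Nm(γ)| ≤ D, and moreover |γ_i| > q^{m_i - 1} for each i = 1,...,s-1. -/
open MeasureTheory Finset

/-! Since `∑ mᵢ = 0`, the box has volume `2^(s+1) D`, so Minkowski's convex body theorem gives a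
nonzero lattice point `γ` in it, and `|Nm γ| ≤ D` as the half-widths multiply to `D`. If some
`|γᵢ| ≤ q^(mᵢ - 1)`, shrinking the `i`-th side by the factor `q` gives `|Nm γ| ≤ D / q`, and the
choice of `q` makes `D / q < c^(s+1)`, contradicting admissibility. -/

theorem Finset.prod_zpow_eq_zpow_sum₀ {ι G₀ : Type*} [CommGroupWithZero G₀] (s : Finset ι) {q : G₀}
    (hq : q ≠ 0) (m : ι → ℤ) : ∏ i ∈ s, q ^ m i = q ^ (∑ i ∈ s, m i) := by
  induction s using Finset.cons_induction with
  | empty => simp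
  | cons a s ha ih => rw [prod_cons, sum_cons, zpow_add₀ hq, ih]

theorem div_two_add_floor_div_lt {x C : ℝ} (hx : 0 ≤ x) (hC : 0 < C) :
    x / (2 + ⌊x / C⌋) < C := by
  have hfloor : x / C < ⌊x / C⌋ + 1 := Int.lt_floor_add_one _
  have hpos : (0 : ℝ) ≤ ⌊x / C⌋ := by exact_mod_cast Int.floor_nonneg.mpr (by positivity)
  rw [div_lt_iff₀ (by linarith), ← div_lt_iff₀' hC]
  linarith

theorem abs_prod_le_prod_div_of_abs_le {ι : Type*} [Fintype ι] [DecidableEq ι] {x a : ι → ℝ}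
    (hxa : ∀ j, |x j| ≤ a j) {i : ι} {q : ℝ} (hi : |x i| ≤ a i / q) :
    |∏ j, x j| ≤ (∏ j, a j) / q := by
  calc |∏ j, x j| = ∏ j, |x j| := abs_prod _ _
    _ ≤ ∏ j, Function.update a i (a i / q) j := by
      refine prod_le_prod (fun j _ => abs_nonneg _) (fun j _ => ?_)
      rcases eq_or_ne j i with rfl | hji
      · simpa using hi
      · simpa [hji] using hxa j
    _ = (∏ j, a j) / q := by
      rw [prod_update_of_mem (mem_univ i), ← mul_prod_erase _ _ (mem_univ i),
        sdiff_singleton_eq_erase]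
      ring

theorem ZLattice.exists_ne_zero_mem_of_covolume_mul_two_pow_le {E : Type*} [NormedAddCommGroup E]
    [NormedSpace ℝ E] [MeasurableSpace E] [BorelSpace E] [FiniteDimensional ℝ E] [Nontrivial E]
    (μ : Measure E) [μ.IsAddHaarMeasure] (L : Submodule ℤ E) [DiscreteTopology L] [IsZLattice ℝ L]
    {S : Set E} (h_symm : ∀ x ∈ S, -x ∈ S) (h_conv : Convex ℝ S) (h_cpt : IsCompact S)
    (h : ENNReal.ofReal (covolume L μ) * 2 ^ Module.finrank ℝ E ≤ μ S) :
    ∃ γ ∈ L, γ ≠ 0 ∧ γ ∈ S := by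
  let b := (Module.Free.chooseBasis ℤ L).ofZLatticeBasis ℝ
  have fund := ZLattice.isAddFundamentalDomain (Module.Free.chooseBasis ℤ L) μ
  have hF : μ (ZSpan.fundamentalDomain b) = ENNReal.ofReal (covolume L μ) := by
    rw [covolume_eq_measure_fundamentalDomain L μ fund, measureReal_def,
      ENNReal.ofReal_toReal (ZSpan.fundamentalDomain_isBounded b).measure_lt_top.ne]
  have : Countable L.toAddSubgroup := inferInstanceAs (Countable L)
  have : DiscreteTopology L.toAddSubgroup := inferInstanceAs (DiscreteTopology L)
  obtain ⟨x, hx0, hxS⟩ := exists_ne_zero_mem_lattice_of_measure_mul_two_pow_le_measure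
    (L := L.toAddSubgroup) fund h_symm h_conv h_cpt (hF ▸ h)
  exact ⟨x, x.2, fun h => hx0 (Subtype.ext h), hxS⟩

section Box

variable {ι : Type*}

theorem EuclideanSpace.setOf_forall_abs_le_eq_preimage (a : ι → ℝ) :
    {x : EuclideanSpace ℝ ι | ∀ j, |x j| ≤ a j} =
      (MeasurableEquiv.toLp 2 (ι → ℝ)).symm ⁻¹' Set.univ.pi (fun j => Set.Icc (-a j) (a j)) := by
  ext x
  simp only [Set.mem_ofPred_eq, Set.mem_preimage, Set.mem_univ_pi, Set.mem_Icc, abs_le]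
  rfl

theorem EuclideanSpace.volume_setOf_forall_abs_le [Fintype ι] {a : ι → ℝ} (ha : ∀ j, 0 ≤ a j) :
    volume {x : EuclideanSpace ℝ ι | ∀ j, |x j| ≤ a j} =
      ENNReal.ofReal (2 ^ Fintype.card ι * ∏ j, a j) := by
  rw [setOf_forall_abs_le_eq_preimage,
    (volume_preserving_symm_measurableEquiv_toLp ι).measure_preimage
      (MeasurableSet.univ_pi fun j => measurableSet_Icc).nullMeasurableSet, volume_pi_pi]
  simp_rw [Real.volume_Icc, sub_neg_eq_add, ← two_mul]
  rw [← ENNReal.ofReal_prod_of_nonneg fun j _ => by linarith [ha j], prod_mul_distrib, prod_const,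
    card_univ]

theorem EuclideanSpace.isCompact_setOf_forall_abs_le (a : ι → ℝ) :
    IsCompact {x : EuclideanSpace ℝ ι | ∀ j, |x j| ≤ a j} := by
  rw [setOf_forall_abs_le_eq_preimage]
  exact (PiLp.continuousLinearEquiv 2 ℝ (fun _ : ι => ℝ)).toHomeomorph.isCompact_preimage.mpr
    (isCompact_univ_pi fun j => isCompact_Icc)

theorem EuclideanSpace.convex_setOf_forall_abs_le (a : ι → ℝ) :
    Convex ℝ {x : EuclideanSpace ℝ ι | ∀ j, |x j| ≤ a j} := by
  rw [setOf_forall_abs_le_eq_preimage]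
  exact (convex_pi fun j _ => convex_Icc _ _).linear_preimage
    (PiLp.continuousLinearEquiv 2 ℝ (fun _ : ι => ℝ)).toLinearMap

theorem ZLattice.exists_ne_zero_mem_abs_le_of_covolume_le [Fintype ι] [Nonempty ι]
    (L : Submodule ℤ (EuclideanSpace ℝ ι)) [DiscreteTopology L] [IsZLattice ℝ L]
    {a : ι → ℝ} (ha : ∀ j, 0 ≤ a j) (h : covolume L ≤ ∏ j, a j) :
    ∃ γ ∈ L, γ ≠ 0 ∧ ∀ j, |γ j| ≤ a j := by
  refine exists_ne_zero_mem_of_covolume_mul_two_pow_le volume L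
    (S := {x : EuclideanSpace ℝ ι | ∀ j, |x j| ≤ a j}) (fun x hx j => by simpa using hx j)
    (EuclideanSpace.convex_setOf_forall_abs_le a) (EuclideanSpace.isCompact_setOf_forall_abs_le a) ?_
  rw [EuclideanSpace.volume_setOf_forall_abs_le ha, finrank_euclideanSpace, mul_comm,
    ENNReal.ofReal_mul (by positivity), ENNReal.ofReal_pow zero_le_two, ENNReal.ofReal_ofNat]
  gcongr

end Box

/-- Minkowski-type lemma for admissible lattices: if `L ⊂ ℝ^{s+1}` has covolume `D`,
`|Nm γ| ≥ c^{s+1}` for all nonzero `γ ∈ L`, `∑ m_i = 0` and `q = 2 + ⌊D/c^{s+1}⌋`, then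
the box `∏_{i<s} [-q^{m_i}, q^{m_i}] × [-D q^{m_s}, D q^{m_s}]` contains a nonzero
`γ ∈ L` with `|Nm γ| ≤ D` and `|γ_i| > q^{m_i - 1}` for every `i < s`. -/
theorem minkowski_box_admissible
    (s : ℕ) (L : Submodule ℤ (EuclideanSpace ℝ (Fin (s + 1))))
    [DiscreteTopology L] [IsZLattice ℝ L]
    (c : ℝ) (hc : 0 < c)
    (hadm : ∀ γ ∈ L, γ ≠ 0 → c ^ (s + 1) ≤ |∏ i, γ i|)
    (D : ℝ) (hD : D = ZLattice.covolume L MeasureTheory.volume)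
    (m : Fin (s + 1) → ℤ) (hm : ∑ i, m i = 0)
    (q : ℝ) (hq : q = 2 + (⌊D / c ^ (s + 1)⌋ : ℤ)) :
    ∃ γ : EuclideanSpace ℝ (Fin (s + 1)), γ ∈ L ∧ γ ≠ 0 ∧
      (∀ i : Fin s, |γ i.castSucc| ≤ q ^ (m i.castSucc)) ∧
      |γ (Fin.last s)| ≤ D * q ^ (m (Fin.last s)) ∧
      |∏ i, γ i| ≤ D ∧
      ∀ i : Fin s, q ^ (m i.castSucc - 1) < |γ i.castSucc| := by
  have hD_pos : 0 < D := hD ▸ ZLattice.covolume_pos L volume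
  have hq_pos : 0 < q := by
    have : (0 : ℝ) ≤ ⌊D / c ^ (s + 1)⌋ := by exact_mod_cast Int.floor_nonneg.mpr (by positivity)
    linarith
  have hDq : D / q < c ^ (s + 1) := hq ▸ div_two_add_floor_div_lt hD_pos.le (pow_pos hc _)
  set a : Fin (s + 1) → ℝ := fun j => (if j = Fin.last s then D else 1) * q ^ m j
  have ha_nonneg : ∀ j, 0 ≤ a j := fun j => by positivity
  have ha_prod : ∏ j, a j = D := by
    rw [prod_mul_distrib, prod_ite_eq' univ (Fin.last s), prod_zpow_eq_zpow_sum₀ _ hq_pos.ne', hm]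
    simp
  have ha_castSucc (i : Fin s) : a i.castSucc = q ^ m i.castSucc := by
    simp [a, (Fin.castSucc_lt_last i).ne]
  obtain ⟨γ, hγL, hγ0, hγa⟩ :=
    ZLattice.exists_ne_zero_mem_abs_le_of_covolume_le L ha_nonneg (hD ▸ ha_prod.ge)
  have hNm : |∏ j, γ j| ≤ D :=
    ha_prod ▸ (abs_prod _ _).trans_le (prod_le_prod (fun j _ => abs_nonneg _) fun j _ => hγa j)
  refine ⟨γ, hγL, hγ0, fun i => ha_castSucc i ▸ hγa _, by simpa [a] using hγa (Fin.last s), hNm,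
    fun i => ?_⟩
  by_contra! hsmall
  have hNm_small : |∏ j, γ j| ≤ D / q := by
    refine ha_prod ▸ abs_prod_le_prod_div_of_abs_le hγa (i := i.castSucc) ?_
    rwa [ha_castSucc, div_eq_mul_inv, ← zpow_sub_one₀ hq_pos.ne']
  linarith [hadm γ hγL hγ0]
end
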